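/- For every integer m ≥ 0 there exist a real constant c and a constant K' > 0 such that for all T ≥ 2 with T ∉ {x n : n ∈ ℕ}, | Σ_{n : x n < T} log^m(x n)/(x n) − A_m(T) − c | ≤ K'·log^{m+1}(T)/T; in particular the limit as T → ∞ of Σ_{n : x n < T} log^m(x n)/(x n) − A_m(T) exists and equals c. -/

import Mathlib

/-!
Put `f(t) = log^m t / t`. Abel summation against the counting function `N` gives
`∑_{x n < T} f(x n) = N(T) f(T) - ∫_1^T N f'`. Split `N = L + Q`. The main part integrates
in closed form: `A_m' = L' f`, so `L f - A_m` is an antiderivative of `L f'`. What remains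
is `Q(T) f(T) - ∫_1^T Q f'`, and `∫_1^T Q f' = ∫_1^∞ Q f' - ∫_T^∞ Q f'`; the first integral
goes into the constant `c`. Both error terms are `O(log^{m+1} T / T)`, because
`|Q| ≤ K log`, `|f'(t)| log t ≪ log^{m+1} t / t²` and `∫_T^∞ log^k t / t² dt ≪ log^k T / T`.
-/

open MeasureTheory Set Filter Real Topology

noncomputable def ACoeff (m : ℕ) (T : ℝ) : ℝ :=
  1 / (2 * Real.pi * (m + 1) * (m + 2)) * Real.log T ^ (m + 1) *
    Real.log (T ^ (m + 1) / (2 * Real.pi) ^ (m + 2))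

noncomputable def logPowDiv (m : ℕ) (t : ℝ) : ℝ := log t ^ m / t

-- At `m = 0` the truncated `m - 1` is harmless: that term carries the factor `m`.
noncomputable def derivLogPowDiv (m : ℕ) (t : ℝ) : ℝ :=
  (m * log t ^ (m - 1) - log t ^ m) / t ^ 2

theorem hasDerivAt_logPowDiv (m : ℕ) {t : ℝ} (ht : t ≠ 0) :
    HasDerivAt (logPowDiv m) (derivLogPowDiv m t) t := by
  have h := ((hasDerivAt_log ht).pow m).div (hasDerivAt_id t) ht
  refine h.congr_deriv ?_
  simp only [derivLogPowDiv, id, Pi.pow_apply]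
  field_simp

theorem continuousAt_derivLogPowDiv (m : ℕ) {t : ℝ} (ht : t ≠ 0) :
    ContinuousAt (derivLogPowDiv m) t := by
  unfold derivLogPowDiv
  fun_prop (disch := simp [ht])

theorem measurable_derivLogPowDiv (m : ℕ) : Measurable (derivLogPowDiv m) := by
  unfold derivLogPowDiv
  fun_prop

theorem tendsto_logPowDiv_atTop (m : ℕ) : Tendsto (logPowDiv m) atTop (𝓝 0) :=
  (tendsto_pow_log_div_mul_add_atTop 1 0 m one_ne_zero).congr fun t => by simp [logPowDiv]

theorem log_pow_le_log_pow_succ_div {t : ℝ} (ht : 2 ≤ t) (k : ℕ) :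
    log t ^ k ≤ log t ^ (k + 1) / log 2 := by
  have h2 : 0 < log 2 := log_pos one_lt_two
  have hlog : log 2 ≤ log t := log_le_log two_pos ht
  rw [le_div_iff₀ h2, pow_succ]
  exact mul_le_mul_of_nonneg_left hlog (pow_nonneg (h2.le.trans hlog) k)

-- `logPowTail k t = ∑_{j ≤ k} (k! / j!) log^j t / t = ∫_t^∞ log^k u / u² du`.
noncomputable def logPowTail : ℕ → ℝ → ℝ
  | 0 => logPowDiv 0
  | k + 1 => fun t => logPowDiv (k + 1) t + (k + 1) * logPowTail k t

theorem hasDerivAt_logPowTail (k : ℕ) {t : ℝ} (ht : t ≠ 0) :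
    HasDerivAt (logPowTail k) (-(log t ^ k / t ^ 2)) t := by
  induction k with
  | zero => exact (hasDerivAt_logPowDiv 0 ht).congr_deriv (by simp [derivLogPowDiv, neg_div])
  | succ k ih =>
    refine ((hasDerivAt_logPowDiv (k + 1) ht).add (ih.const_mul ((k : ℝ) + 1))).congr_deriv ?_
    simp only [derivLogPowDiv, Nat.add_sub_cancel]
    push_cast
    ring

theorem tendsto_logPowTail_atTop (k : ℕ) : Tendsto (logPowTail k) atTop (𝓝 0) := by
  induction k with
  | zero => exact tendsto_logPowDiv_atTop 0
  | succ k ih =>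
    have h := (tendsto_logPowDiv_atTop (k + 1)).add (ih.const_mul ((k : ℝ) + 1))
    rwa [mul_zero, add_zero] at h

theorem hasDerivAt_neg_logPowTail (k : ℕ) {t : ℝ} (ht : t ≠ 0) :
    HasDerivAt (fun t => -logPowTail k t) (log t ^ k / t ^ 2) t := by
  simpa using (hasDerivAt_logPowTail k ht).fun_neg

theorem exists_logPowTail_le (k : ℕ) :
    ∃ C, 0 ≤ C ∧ ∀ T ≥ (2 : ℝ), logPowTail k T ≤ C * (log T ^ k / T) := by
  induction k with
  | zero => exact ⟨1, zero_le_one, fun T _ => by simp [logPowTail, logPowDiv]⟩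
  | succ k ih =>
    obtain ⟨C, hC, hle⟩ := ih
    refine ⟨1 + (k + 1) * C / log 2, by positivity, fun T hT => ?_⟩
    have hT0 : 0 < T := by linarith
    calc logPowTail (k + 1) T
        ≤ log T ^ (k + 1) / T + (k + 1) * (C * (log T ^ (k + 1) / log 2 / T)) := by
          simp only [logPowTail, logPowDiv]
          gcongr
          exact (hle T hT).trans (by gcongr; exact log_pow_le_log_pow_succ_div hT k)
      _ = (1 + (k + 1) * C / log 2) * (log T ^ (k + 1) / T) := by ring

theorem log_pow_div_sq_nonneg (k : ℕ) {t : ℝ} (ht : 1 ≤ t) : 0 ≤ log t ^ k / t ^ 2 := by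
  have := log_nonneg ht
  positivity

theorem integrableOn_Ioi_log_pow_div_sq (k : ℕ) {T : ℝ} (hT : 1 ≤ T) :
    IntegrableOn (fun t => log t ^ k / t ^ 2) (Ioi T) :=
  integrableOn_Ioi_deriv_of_nonneg' (g := fun t => -logPowTail k t)
    (fun t ht => hasDerivAt_neg_logPowTail k (by linarith [ht.out]))
    (fun t ht => log_pow_div_sq_nonneg k (hT.trans ht.out.le))
    (by simpa using (tendsto_logPowTail_atTop k).neg)

theorem integral_Ioi_log_pow_div_sq (k : ℕ) {T : ℝ} (hT : 1 ≤ T) :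
    ∫ t in Ioi T, log t ^ k / t ^ 2 = logPowTail k T := by
  rw [integral_Ioi_of_hasDerivAt_of_nonneg' (g := fun t => -logPowTail k t)
    (fun t ht => hasDerivAt_neg_logPowTail k (by linarith [ht.out]))
    (fun t ht => log_pow_div_sq_nonneg k (hT.trans ht.out.le))
    (by simpa using (tendsto_logPowTail_atTop k).neg)]
  ring

noncomputable def mainCount (T : ℝ) : ℝ :=
  7 / 8 + T / (2 * π) * log (T / (2 * π)) - T / (2 * π)

theorem measurable_mainCount : Measurable mainCount := by
  unfold mainCount
  fun_prop

theorem hasDerivAt_mainCount {t : ℝ} (ht : t ≠ 0) :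
    HasDerivAt mainCount (log (t / (2 * π)) / (2 * π)) t := by
  have hπ : 2 * π ≠ 0 := by positivity
  have hu : HasDerivAt (fun u => u / (2 * π)) (1 / (2 * π)) t := (hasDerivAt_id t).div_const _
  refine (((hu.mul (hu.log (div_ne_zero ht hπ))).const_add _).sub hu).congr_deriv ?_
  field_simp
  ring

theorem hasDerivAt_ACoeff (m : ℕ) {t : ℝ} (ht : t ≠ 0) :
    HasDerivAt (ACoeff m) (log (t / (2 * π)) / (2 * π) * logPowDiv m t) t := by
  have hπ : 2 * π ≠ 0 := by positivity
  have hA : (fun u => log u ^ (m + 1) * ((m + 1) * log u - (m + 2) * log (2 * π)) /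
      (2 * π * (m + 1) * (m + 2))) =ᶠ[𝓝 t] ACoeff m := by
    filter_upwards [isOpen_ne.mem_nhds ht] with u hu
    rw [ACoeff, log_div (pow_ne_zero _ hu) (pow_ne_zero _ hπ), log_pow, log_pow]
    push_cast
    ring
  have hlog := hasDerivAt_log ht
  refine ((((hlog.pow (m + 1)).mul ((hlog.const_mul _).sub_const _)).div_const _
    ).congr_of_eventuallyEq hA.symm).congr_deriv ?_
  simp only [Pi.pow_apply]
  rw [log_div ht hπ, logPowDiv]
  field_simp
  push_cast
  ring

theorem intervalIntegrable_mainCount_mul_derivLogPowDiv (m : ℕ) {a b : ℝ} (ha : 0 < a)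
    (hb : 0 < b) : IntervalIntegrable (fun t => mainCount t * derivLogPowDiv m t) volume a b := by
  refine ContinuousOn.intervalIntegrable fun t ht => ?_
  have ht0 : t ≠ 0 := (lt_min ha hb |>.trans_le ht.1).ne'
  exact ((hasDerivAt_mainCount ht0).continuousAt.mul
    (continuousAt_derivLogPowDiv m ht0)).continuousWithinAt

theorem integral_mainCount_mul_derivLogPowDiv (m : ℕ) {a b : ℝ} (ha : 0 < a) (hb : 0 < b) :
    ∫ t in a..b, mainCount t * derivLogPowDiv m t =
      (mainCount b * logPowDiv m b - ACoeff m b) - (mainCount a * logPowDiv m a - ACoeff m a) := by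
  refine intervalIntegral.integral_eq_sub_of_hasDerivAt
    (f := fun t => mainCount t * logPowDiv m t - ACoeff m t) (fun t ht => ?_)
    (intervalIntegrable_mainCount_mul_derivLogPowDiv m ha hb)
  have ht0 : t ≠ 0 := (lt_min ha hb |>.trans_le ht.1).ne'
  refine (((hasDerivAt_mainCount ht0).mul (hasDerivAt_logPowDiv m ht0)).sub
    (hasDerivAt_ACoeff m ht0)).congr_deriv ?_
  ring

theorem abs_derivLogPowDiv_mul_log_le (m : ℕ) {t : ℝ} (ht : 2 ≤ t) :
    |derivLogPowDiv m t| * log t ≤ (m / log 2 + 1) * (log t ^ (m + 1) / t ^ 2) := by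
  have hl : 0 ≤ log t := log_nonneg (by linarith)
  have hm : (m : ℝ) * log t ^ (m - 1) * log t = m * log t ^ m := by
    cases m with
    | zero => simp
    | succ m => rw [Nat.add_sub_cancel, mul_assoc, ← pow_succ]
  have hnum : |m * log t ^ (m - 1) - log t ^ m| ≤ m * log t ^ (m - 1) + log t ^ m :=
    abs_le.2 ⟨by nlinarith [pow_nonneg hl (m - 1), pow_nonneg hl m],
      by nlinarith [pow_nonneg hl (m - 1), pow_nonneg hl m]⟩
  calc |derivLogPowDiv m t| * log t ≤ (m * log t ^ (m - 1) + log t ^ m) / t ^ 2 * log t := by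
        rw [derivLogPowDiv, abs_div, abs_of_nonneg (sq_nonneg t)]
        gcongr
    _ = (m * log t ^ m + log t ^ (m + 1)) / t ^ 2 := by
        rw [div_mul_eq_mul_div, add_mul, hm, ← pow_succ]
    _ ≤ (m * (log t ^ (m + 1) / log 2) + log t ^ (m + 1)) / t ^ 2 := by
        gcongr
        exact log_pow_le_log_pow_succ_div ht m
    _ = (m / log 2 + 1) * (log t ^ (m + 1) / t ^ 2) := by ring

theorem abs_mul_derivLogPowDiv_le {Q : ℝ → ℝ} {K t : ℝ} (m : ℕ) (hQ : |Q t| ≤ K * log t)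
    (ht : 2 ≤ t) :
    |Q t * derivLogPowDiv m t| ≤ K * (m / log 2 + 1) * (log t ^ (m + 1) / t ^ 2) := by
  have hK : 0 ≤ K :=
    nonneg_of_mul_nonneg_left ((abs_nonneg _).trans hQ) (log_pos (by linarith))
  calc |Q t * derivLogPowDiv m t| ≤ K * log t * |derivLogPowDiv m t| := by
        rw [abs_mul]
        gcongr
    _ = K * (|derivLogPowDiv m t| * log t) := by ring
    _ ≤ K * ((m / log 2 + 1) * (log t ^ (m + 1) / t ^ 2)) :=
        mul_le_mul_of_nonneg_left (abs_derivLogPowDiv_mul_log_le m ht) hK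
    _ = _ := by ring

theorem sum_eq_card_mul_sub_integral_card_filter_lt {ι : Type*} (s : Finset ι)
    (y : ι → ℝ) {f f' : ℝ → ℝ} {a b : ℝ} (hy : ∀ i ∈ s, y i ∈ Icc a b)
    (hf : ∀ t ∈ Icc a b, HasDerivAt f (f' t) t) (hf' : IntervalIntegrable f' volume a b) :
    ∑ i ∈ s, f (y i) =
      s.card * f b - ∫ t in a..b, ((s.filter (y · < t)).card : ℝ) * f' t := by
  have hterm : ∀ i ∈ s, ∫ t in a..b, (Ioi (y i)).indicator f' t = f b - f (y i) := by
    intro i hi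
    obtain ⟨hay, hyb⟩ := hy i hi
    have hsub : uIcc (y i) b ⊆ uIcc a b := by
      rw [uIcc_of_le hyb, uIcc_of_le (hay.trans hyb)]
      exact Icc_subset_Icc_left hay
    rw [intervalIntegral.integral_of_le (hay.trans hyb), setIntegral_indicator measurableSet_Ioi,
      Ioc_inter_Ioi, max_eq_right hay, ← intervalIntegral.integral_of_le hyb]
    refine intervalIntegral.integral_eq_sub_of_hasDerivAt (fun t ht => hf t ?_) (hf'.mono_set hsub)
    rw [uIcc_of_le hyb] at ht
    exact ⟨hay.trans ht.1, ht.2⟩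
  have hcount : ∀ t,
      ∑ i ∈ s, (Ioi (y i)).indicator f' t = (s.filter (y · < t)).card * f' t := by
    intro t
    simp only [indicator_apply, mem_Ioi, ← Finset.sum_filter, Finset.sum_const, nsmul_eq_mul]
  rw [Finset.sum_congr rfl fun i hi => (sub_sub_cancel (f b) (f (y i))).symm,
    Finset.sum_sub_distrib, Finset.sum_const, nsmul_eq_mul, ← Finset.sum_congr rfl hterm,
    ← intervalIntegral.integral_finsetSum fun i _ =>
      ⟨hf'.1.indicator measurableSet_Ioi, hf'.2.indicator measurableSet_Ioi⟩]
  simp only [hcount]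

noncomputable def countBelow (x : ℕ → ℝ) (t : ℝ) : ℕ := Nat.card {n : ℕ // x n < t}

noncomputable def logPowSum (x : ℕ → ℝ) (m : ℕ) (T : ℝ) : ℝ :=
  ∑' n : ℕ, if x n < T then log (x n) ^ m / x n else 0

section Counting

variable {x : ℕ → ℝ}

theorem finite_setOf_lt_of_tendsto_atTop (hx : Tendsto x atTop atTop) (T : ℝ) :
    {n | x n < T}.Finite := by
  have h : ∀ᶠ n in cofinite, T ≤ x n := Nat.cofinite_eq_atTop ▸ hx.eventually_ge_atTop T
  simpa using h

theorem countBelow_eq_card_filter {s : Finset ℕ} {t : ℝ} (hs : ∀ n, x n < t → n ∈ s) :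
    countBelow x t = (s.filter (x · < t)).card := by
  have h : {n | x n < t} = ↑(s.filter (x · < t)) := by
    ext n
    simpa using fun h => hs n h
  rw [countBelow, ← Set.coe_ofPred, h, Nat.card_coe_set_eq, Set.ncard_coe_finset]

theorem countBelow_mono (hx : Tendsto x atTop atTop) : Monotone (countBelow x) :=
  fun _ v huv => Nat.card_mono (finite_setOf_lt_of_tendsto_atTop hx v)
    fun _ hn => lt_of_lt_of_le hn huv

theorem intervalIntegrable_countBelow_mul_derivLogPowDiv (hx : Tendsto x atTop atTop) (m : ℕ)
    {a b : ℝ} (ha : 0 < a) (hb : 0 < b) :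
    IntervalIntegrable (fun t => (countBelow x t : ℝ) * derivLogPowDiv m t) volume a b :=
  (Nat.mono_cast.comp (countBelow_mono hx)).intervalIntegrable.mul_continuousOn
    fun _ ht =>
      (continuousAt_derivLogPowDiv m (lt_min ha hb |>.trans_le ht.1).ne').continuousWithinAt

theorem logPowSum_eq (hx : Tendsto x atTop atTop) (hx1 : ∀ n, 1 ≤ x n) (m : ℕ) {T : ℝ}
    (hT : 1 ≤ T) :
    logPowSum x m T =
      countBelow x T * logPowDiv m T -
        ∫ t in (1)..T, (countBelow x t : ℝ) * derivLogPowDiv m t := by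
  set s := (finite_setOf_lt_of_tendsto_atTop hx T).toFinset
  have hs : ∀ n, n ∈ s ↔ x n < T := by simp [s]
  have hcount : ∀ t ≤ T, countBelow x t = (s.filter (x · < t)).card := fun t ht =>
    countBelow_eq_card_filter fun n hn => (hs n).2 (hn.trans_le ht)
  have hsum : logPowSum x m T = ∑ n ∈ s, logPowDiv m (x n) := by
    rw [logPowSum, tsum_eq_sum fun n hn => if_neg (mt (hs n).2 hn)]
    exact Finset.sum_congr rfl fun n hn => if_pos ((hs n).1 hn)
  have hpos : ∀ t ∈ Icc 1 T, t ≠ 0 := fun t ht => (zero_lt_one.trans_le ht.1).ne'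
  rw [hsum, sum_eq_card_mul_sub_integral_card_filter_lt s x
      (fun n hn => ⟨hx1 n, ((hs n).1 hn).le⟩) (fun t ht => hasDerivAt_logPowDiv m (hpos t ht))
      (ContinuousOn.intervalIntegrable fun t ht => (continuousAt_derivLogPowDiv m
        (hpos t (uIcc_of_le hT ▸ ht))).continuousWithinAt),
    hcount T le_rfl, Finset.filter_true_of_mem fun n hn => (hs n).1 hn]
  congr 1
  refine intervalIntegral.integral_congr fun t ht => ?_
  rw [uIcc_of_le hT] at ht
  simp only [hcount t ht.2]

end Counting

theorem logPowSum_sub_ACoeff_eq {x : ℕ → ℝ} (hx : Tendsto x atTop atTop)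
    (hx1 : ∀ n, 1 ≤ x n) (m : ℕ) {T : ℝ} (hT : 1 ≤ T) :
    logPowSum x m T - ACoeff m T =
      (countBelow x T - mainCount T) * logPowDiv m T
        + (mainCount 1 * logPowDiv m 1 - ACoeff m 1)
        - ∫ t in (1)..T, (countBelow x t - mainCount t) * derivLogPowDiv m t := by
  have hT0 : 0 < T := zero_lt_one.trans_le hT
  simp only [sub_mul]
  rw [logPowSum_eq hx hx1 m hT, intervalIntegral.integral_sub
      (intervalIntegrable_countBelow_mul_derivLogPowDiv hx m one_pos hT0)
      (intervalIntegrable_mainCount_mul_derivLogPowDiv m one_pos hT0),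
    integral_mainCount_mul_derivLogPowDiv m one_pos hT0]
  ring

section Tail

variable {Q : ℝ → ℝ} {K : ℝ} (m : ℕ)

theorem integrableOn_Ioi_mul_derivLogPowDiv (hQm : Measurable Q)
    (hQ : ∀ t ≥ 2, |Q t| ≤ K * log t) {T : ℝ} (hT : 2 ≤ T) :
    IntegrableOn (fun t => Q t * derivLogPowDiv m t) (Ioi T) := by
  refine ((integrableOn_Ioi_log_pow_div_sq (m + 1) (by linarith)).const_mul
    (K * (m / log 2 + 1))).mono' (hQm.mul (measurable_derivLogPowDiv m)).aestronglyMeasurable ?_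
  filter_upwards [ae_restrict_mem measurableSet_Ioi] with t ht
  have ht2 : 2 ≤ t := hT.trans ht.out.le
  exact abs_mul_derivLogPowDiv_le m (hQ t ht2) ht2

theorem abs_integral_Ioi_mul_derivLogPowDiv_le
    (hQ : ∀ t ≥ 2, |Q t| ≤ K * log t) {T : ℝ} (hT : 2 ≤ T) :
    |∫ t in Ioi T, Q t * derivLogPowDiv m t| ≤ K * (m / log 2 + 1) * logPowTail (m + 1) T := by
  have hT1 : 1 ≤ T := by linarith
  calc |∫ t in Ioi T, Q t * derivLogPowDiv m t|
      ≤ ∫ t in Ioi T, K * (m / log 2 + 1) * (log t ^ (m + 1) / t ^ 2) := by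
        rw [← Real.norm_eq_abs]
        refine norm_integral_le_of_norm_le
          ((integrableOn_Ioi_log_pow_div_sq (m + 1) hT1).const_mul _) ?_
        filter_upwards [ae_restrict_mem measurableSet_Ioi] with t ht
        have ht2 : 2 ≤ t := hT.trans ht.out.le
        exact abs_mul_derivLogPowDiv_le m (hQ t ht2) ht2
    _ = K * (m / log 2 + 1) * logPowTail (m + 1) T := by
        rw [integral_const_mul, integral_Ioi_log_pow_div_sq (m + 1) hT1]

end Tail

theorem exists_abs_logPowSum_sub_ACoeff_sub_le {x : ℕ → ℝ} (hx : Tendsto x atTop atTop)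
    (hx1 : ∀ n, 1 ≤ x n) {K : ℝ} (hK : 0 < K)
    (hQ : ∀ T ≥ 2, |(countBelow x T : ℝ) - mainCount T| ≤ K * log T) (m : ℕ) :
    ∃ c, ∃ K' > 0, ∀ T ≥ 2,
      |logPowSum x m T - ACoeff m T - c| ≤ K' * log T ^ (m + 1) / T := by
  set Q : ℝ → ℝ := fun t => countBelow x t - mainCount t
  have hQm : Measurable Q :=
    (Nat.mono_cast.comp (countBelow_mono hx)).measurable.sub measurable_mainCount
  have hint : IntegrableOn (fun t => Q t * derivLogPowDiv m t) (Ioi 1) := by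
    rw [← Ioc_union_Ioi_eq_Ioi one_le_two]
    refine IntegrableOn.union ?_ (integrableOn_Ioi_mul_derivLogPowDiv m hQm hQ le_rfl)
    refine (intervalIntegrable_iff_integrableOn_Ioc_of_le one_le_two).1 ?_
    simpa only [Q, sub_mul] using
      (intervalIntegrable_countBelow_mul_derivLogPowDiv hx m one_pos two_pos).sub
        (intervalIntegrable_mainCount_mul_derivLogPowDiv m one_pos two_pos)
  obtain ⟨C, hC, hCle⟩ := exists_logPowTail_le (m + 1)
  refine ⟨mainCount 1 * logPowDiv m 1 - ACoeff m 1 - ∫ t in Ioi 1, Q t * derivLogPowDiv m t,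
    K + K * (m / log 2 + 1) * C, by positivity, fun T hT => ?_⟩
  have hT0 : 0 < T := by linarith
  have hf : 0 ≤ logPowDiv m T := div_nonneg (pow_nonneg (log_nonneg (by linarith)) m) hT0.le
  rw [logPowSum_sub_ACoeff_eq hx hx1 m (by linarith),
    ← intervalIntegral.integral_Ioi_sub_Ioi hint (by linarith)]
  calc _ = |Q T * logPowDiv m T + ∫ t in Ioi T, Q t * derivLogPowDiv m t| := by
        congr 1
        ring
    _ ≤ |Q T| * logPowDiv m T + |∫ t in Ioi T, Q t * derivLogPowDiv m t| := by
        rw [← abs_of_nonneg hf, ← abs_mul, abs_of_nonneg hf]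
        exact abs_add_le _ _
    _ ≤ K * log T * logPowDiv m T + K * (m / log 2 + 1) * (C * (log T ^ (m + 1) / T)) :=
        add_le_add (mul_le_mul_of_nonneg_right (hQ T hT) hf)
          ((abs_integral_Ioi_mul_derivLogPowDiv_le m hQ hT).trans
            (mul_le_mul_of_nonneg_left (hCle T hT) (by positivity)))
    _ = (K + K * (m / log 2 + 1) * C) * log T ^ (m + 1) / T := by
        rw [logPowDiv, pow_succ]
        ring

theorem tendsto_of_abs_sub_le_mul_log_pow_div {F : ℝ → ℝ} {c K' : ℝ} {k : ℕ}
    (h : ∀ T ≥ 2, |F T - c| ≤ K' * log T ^ k / T) : Tendsto F atTop (𝓝 c) := by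
  have hbound : Tendsto (fun T => K' * log T ^ k / T) atTop (𝓝 0) := by
    simpa [mul_div_assoc] using
      (tendsto_pow_log_div_mul_add_atTop 1 0 k one_ne_zero).const_mul K'
  refine tendsto_iff_norm_sub_tendsto_zero.2 (squeeze_zero_norm' ?_ hbound)
  filter_upwards [eventually_ge_atTop 2] with T hT
  simpa using h T hT

/-- For a nondecreasing sequence `x` with `x 0 > 1` and `x n → ∞`, with counting
function `N`, `L(T) = 7/8 + (T/(2π)) log(T/(2π)) - T/(2π)`, `Q = N - L` satisfying
`|Q T| ≤ K log T` for `T ≥ 2`: for every `m ≥ 0` there are a constant `c` and `K' > 0`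
with `|∑_{x n < T} log^m(x n)/(x n) - A_m(T) - c| ≤ K' log^{m+1}(T)/T` for all `T ≥ 2`
outside the range of `x`; in particular `∑_{x n < T} log^m(x n)/(x n) - A_m(T) → c`
as `T → ∞`. -/
theorem sum_sub_ACoeff_tendsto (x : ℕ → ℝ) (hmono : Monotone x) (hx0 : 1 < x 0)
    (hlim : Filter.Tendsto x Filter.atTop Filter.atTop)
    (N : ℝ → ℕ) (hN : ∀ T : ℝ, N T = Nat.card {n : ℕ // x n < T})
    (L : ℝ → ℝ)
    (hL : ∀ T : ℝ, L T = 7 / 8 + T / (2 * Real.pi) * Real.log (T / (2 * Real.pi))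
      - T / (2 * Real.pi))
    (Q : ℝ → ℝ) (hQ : ∀ T : ℝ, Q T = (N T : ℝ) - L T)
    (hQbound : ∃ K > (0 : ℝ), ∀ T ≥ (2 : ℝ), |Q T| ≤ K * Real.log T)
    (m : ℕ) :
    ∃ c : ℝ, ∃ K' > (0 : ℝ),
      (∀ T ≥ (2 : ℝ), T ∉ Set.range x →
        |(∑' n : ℕ, if x n < T then Real.log (x n) ^ m / x n else 0) - ACoeff m T - c|
          ≤ K' * Real.log T ^ (m + 1) / T) ∧
      Filter.Tendsto (fun T : ℝ =>
          (∑' n : ℕ, if x n < T then Real.log (x n) ^ m / x n else 0) - ACoeff m T)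
        Filter.atTop (nhds c) := by
  obtain ⟨K, hK, hQK⟩ := hQbound
  have hQ' : ∀ T, Q T = countBelow x T - mainCount T := fun T => by
    rw [hQ, hN, hL]
    rfl
  obtain ⟨c, K', hK', hc⟩ := exists_abs_logPowSum_sub_ACoeff_sub_le hlim
    (fun n => hx0.le.trans (hmono n.zero_le)) hK (fun T hT => hQ' T ▸ hQK T hT) m
  exact ⟨c, K', hK', fun T hT _ => hc T hT, tendsto_of_abs_sub_le_mul_log_pow_div hc⟩
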